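/- arXiv:2004.08902 — 12 statements merged into one kernel-verified Lean document; each statement's English description precedes it below -/
import Mathlib

section
/- (Shannon product difference identity) For all natural numbers n, u, v: H(n+u)·H(n+v) − H(n+u+v)·H n = (−b)^n · ( H u · H v − H(u+v) · H 0 ). -/
theorem stmt_2 (a b : ℝ) (H : ℕ → ℝ)
    (hH : ∀ n : ℕ, 2 ≤ n → H n = a * H (n-1) + b * H (n-2)) :
    ∀ n u v : ℕ,
      H (n+u) * H (n+v) - H (n+u+v) * H n
        = (-b)^n * (H u * H v - H (u+v) * H 0) := by
  have hrec : ∀ k : ℕ, H (k+2) = a * H (k+1) + b * H k := by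
    intro k
    have := hH (k+2) (by omega)
    simpa using this
  -- Cassini
  have cassini : ∀ n : ℕ, H (n+1) * H (n+1) - H (n+2) * H n
      = (-b)^n * (H 1 * H 1 - H 2 * H 0) := by
    intro n
    induction n with
    | zero => simp
    | succ n ih =>
      have h1 := hrec n
      have h2 := hrec (n+1)
      have e1 : n+1+1 = n+2 := by omega
      have e2 : n+1+2 = n+3 := by omega
      rw [e1, e2, pow_succ]
      have h3 : H (n+3) = a * H (n+2) + b * H (n+1) := by
        rw [show n+3 = n+1+2 by omega]; exact hrec (n+1)
      rw [h1] at ih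
      rw [h3, h1]
      linear_combination (-b) * ih
  -- E(n,u) : v = 1 case
  have E : ∀ n u : ℕ, H (n+u) * H (n+1) - H (n+u+1) * H n
      = (-b)^n * (H u * H 1 - H (u+1) * H 0) := by
    intro n u
    induction u using Nat.twoStepInduction with
    | zero => simp; ring
    | one =>
      rw [show n+1+1 = n+2 by omega, show (1+1 : ℕ) = 2 by norm_num]
      exact cassini n
    | more k A B =>
      have h1 : H (n+(k+2)) = a * H (n+k+1) + b * H (n+k) := by
        rw [show n+(k+2) = n+k+2 by omega]; exact hrec (n+k)
      have h2 : H (n+(k+2)+1) = a * H (n+(k+1)+1) + b * H (n+k+1) := by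
        rw [show n+(k+2)+1 = n+k+1+2 by omega, show n+(k+1)+1 = n+k+1+1 by omega]
        exact hrec (n+k+1)
      have h3 : H (k+2) = a * H (k+1) + b * H k := hrec k
      have h4 : H (k+2+1) = a * H (k+1+1) + b * H (k+1) := by
        rw [show k+2+1 = k+1+2 by omega]; exact hrec (k+1)
      have e : n+(k+1) = n+k+1 := by omega
      rw [e] at B
      rw [h1, h2, h3, h4, e]
      linear_combination a * B + b * A
  intro n u v
  induction v using Nat.twoStepInduction with
  | zero => simp
  | one => exact E n u
  | more k ih1 ih2 =>
    have h1 : H (n+(k+2)) = a * H (n+(k+1)) + b * H (n+k) := by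
      rw [show n+(k+2) = n+k+2 by omega, show n+(k+1) = n+k+1 by omega]
      exact hrec (n+k)
    have h2 : H (n+u+(k+2)) = a * H (n+u+(k+1)) + b * H (n+u+k) := by
      rw [show n+u+(k+2) = n+u+k+2 by omega, show n+u+(k+1) = n+u+k+1 by omega]
      exact hrec (n+u+k)
    have h3 : H (u+(k+2)) = a * H (u+(k+1)) + b * H (u+k) := by
      rw [show u+(k+2) = u+k+2 by omega, show u+(k+1) = u+k+1 by omega]
      exact hrec (u+k)
    rw [h1, h2, h3, hrec k]
    linear_combination a * ih2 + b * ih1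
end

section
/- (Generalized product difference identity) For all natural numbers n, u, v: G(n+u)·G(n+v) − G(n+u+v)·G n = (−b)^n·(H₁ − H₀·α)·(H₁ − H₀·β)·(h u)·(h v) + p·d^(n+u+v)·( G(n+u)·d^(−u) + G(n+v)·d^(−v) − G(n+u+v)·d^(−u−v) − G n ). -/
/-!
If `x` solves `x (n+2) = (α+β) x (n+1) - αβ x n`, then `x (n+1) - β x n` is geometric
with ratio `α` (and symmetrically), which gives the Binet form
`(α - β) x n = (x 1 - β x 0) αⁿ - (x 1 - α x 0) βⁿ`. Substituting it into both sides of the product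
difference identity turns it into a polynomial identity in `α`, `β` after multiplying by `(α - β)²`.
The inhomogeneous sequence `G` is reduced to this case by subtracting the particular solution `p dⁿ`;
the cross terms with `p` are exactly the second summand of the identity.
-/

section SecondOrderRecurrence

variable {R : Type*} [CommRing R] {α β : R} {x : ℕ → R}

theorem succ_sub_mul_eq_mul_pow (hx : ∀ n, x (n + 2) = (α + β) * x (n + 1) - α * β * x n)
    (n : ℕ) : x (n + 1) - β * x n = (x 1 - β * x 0) * α ^ n := by
  induction n with
  | zero => ring
  | succ n ih => rw [hx, pow_succ, ← mul_assoc, ← ih]; ring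

theorem sub_mul_eq_binet (hx : ∀ n, x (n + 2) = (α + β) * x (n + 1) - α * β * x n) (n : ℕ) :
    (α - β) * x n = (x 1 - β * x 0) * α ^ n - (x 1 - α * x 0) * β ^ n := by
  have hx' : ∀ n, x (n + 2) = (β + α) * x (n + 1) - β * α * x n := by
    intro n; rw [hx]; ring
  linear_combination succ_sub_mul_eq_mul_pow hx n - succ_sub_mul_eq_mul_pow hx' n

theorem mul_sub_mul_eq_of_rec [IsDomain R] (hαβ : α ≠ β) {y : ℕ → R}
    (hx : ∀ n, x (n + 2) = (α + β) * x (n + 1) - α * β * x n)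
    (hy : ∀ n, y (n + 2) = (α + β) * y (n + 1) - α * β * y n) (hy0 : y 0 = 0) (hy1 : y 1 = 1)
    (n u v : ℕ) :
    x (n + u) * x (n + v) - x (n + u + v) * x n
      = (α * β) ^ n * (x 1 - α * x 0) * (x 1 - β * x 0) * y u * y v := by
  have hne : (α - β) ^ 2 ≠ 0 := pow_ne_zero 2 (sub_ne_zero.mpr hαβ)
  refine mul_left_cancel₀ hne ?_
  have hbx := sub_mul_eq_binet hx
  have hby := sub_mul_eq_binet hy
  simp only [hy0, hy1, mul_zero, sub_zero] at hby
  calc (α - β) ^ 2 * (x (n + u) * x (n + v) - x (n + u + v) * x n)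
      = (α - β) * x (n + u) * ((α - β) * x (n + v))
          - (α - β) * x (n + u + v) * ((α - β) * x n) := by ring
    _ = (α * β) ^ n * (x 1 - α * x 0) * (x 1 - β * x 0) * ((α - β) * y u) * ((α - β) * y v) := by
        rw [hbx, hbx, hbx, hbx, hby, hby]; ring
    _ = _ := by ring

end SecondOrderRecurrence

theorem quadratic_roots_add_mul {a b α β : ℝ} (hdisc : 0 ≤ a ^ 2 + 4 * b)
    (hα : α = (a + Real.sqrt (a ^ 2 + 4 * b)) / 2) (hβ : β = (a - Real.sqrt (a ^ 2 + 4 * b)) / 2) :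
    α + β = a ∧ α * β = -b := by
  have hs := Real.sq_sqrt hdisc
  subst hα hβ
  exact ⟨by ring, by linear_combination -hs / 4⟩

theorem mul_sub_mul_eq_add_geom {F : Type*} [Field F] {G K : ℕ → F} {p d : F} (hd : d ≠ 0)
    (hG : ∀ n, G n = K n + p * d ^ n) (n u v : ℕ) :
    G (n + u) * G (n + v) - G (n + u + v) * G n
      = K (n + u) * K (n + v) - K (n + u + v) * K n
        + p * d ^ (n + u + v) * (G (n + u) * d ^ (-(u : ℤ)) + G (n + v) * d ^ (-(v : ℤ))
          - G (n + u + v) * d ^ (-(u : ℤ) - (v : ℤ)) - G n) := by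
  rw [sub_eq_add_neg (-(u : ℤ)), ← neg_add, zpow_neg, zpow_neg, zpow_neg, ← Nat.cast_add,
    zpow_natCast, zpow_natCast, zpow_natCast]
  simp only [hG]
  field_simp
  ring

theorem stmt_3_general (a b c d : ℝ) (hb : 0 < b) (hd : 0 < d)
    (hden : d^2 - a*d - b ≠ 0)
    (α β p : ℝ)
    (hα : α = (a + Real.sqrt (a^2 + 4*b)) / 2)
    (hβ : β = (a - Real.sqrt (a^2 + 4*b)) / 2)
    (hp : p = c * d^2 / (d^2 - a*d - b))
    (G : ℕ → ℝ)
    (hG : ∀ n : ℕ, 2 ≤ n → G n = a * G (n-1) + b * G (n-2) + c * d^n)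
    (H0 H1 : ℝ) (hH0 : H0 = G 0 - p) (hH1 : H1 = G 1 - p*d)
    (h : ℕ → ℝ) (hh0 : h 0 = 0) (hh1 : h 1 = 1)
    (hhrec : ∀ n : ℕ, 2 ≤ n → h n = a * h (n-1) + b * h (n-2)) :
    ∀ n u v : ℕ,
      G (n+u) * G (n+v) - G (n+u+v) * G n
        = (-b)^n * (H1 - H0*α) * (H1 - H0*β) * h u * h v
          + p * d^(n+u+v) *
            (G (n+u) * d^(-(u:ℤ)) + G (n+v) * d^(-(v:ℤ))
              - G (n+u+v) * d^(-(u:ℤ)-(v:ℤ)) - G n) := by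
  intro n u v
  have hdisc : 0 < a ^ 2 + 4 * b := by positivity
  obtain ⟨hsum, hprod⟩ := quadratic_roots_add_mul hdisc.le hα hβ
  have hαβ : α ≠ β := by
    rw [hα, hβ]; linarith [Real.sqrt_pos.mpr hdisc]
  have hpd : p * (d ^ 2 - a * d - b) = c * d ^ 2 := by rw [hp, div_mul_cancel₀ _ hden]
  -- `p dⁿ` is a particular solution, so `K` solves the homogeneous recurrence.
  set K : ℕ → ℝ := fun n => G n - p * d ^ n with hKdef
  have hK : ∀ n, K (n + 2) = (α + β) * K (n + 1) - α * β * K n := by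
    intro n
    have hG2 : G (n + 2) = a * G (n + 1) + b * G n + c * d ^ (n + 2) := hG (n + 2) (by omega)
    simp only [hKdef, hsum, hprod]
    linear_combination hG2 - d ^ n * hpd
  have hh : ∀ n, h (n + 2) = (α + β) * h (n + 1) - α * β * h n := by
    intro n
    have hh2 : h (n + 2) = a * h (n + 1) + b * h n := hhrec (n + 2) (by omega)
    rw [hsum, hprod, hh2]
    ring
  rw [mul_sub_mul_eq_add_geom hd.ne' (G := G) (K := K) (fun n => by ring),
    mul_sub_mul_eq_of_rec hαβ hK hh hh0 hh1, hprod]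
  simp only [hKdef, hH0, hH1]
  ring

theorem stmt_3 (a b c d : ℝ) (ha : 0 < a) (hb : 0 < b) (hc : 0 ≤ c) (hd : 0 < d)
    (hden : d^2 - a*d - b ≠ 0)
    (α β p : ℝ)
    (hα : α = (a + Real.sqrt (a^2 + 4*b)) / 2)
    (hβ : β = (a - Real.sqrt (a^2 + 4*b)) / 2)
    (hp : p = c * d^2 / (d^2 - a*d - b))
    (G : ℕ → ℝ)
    (hG : ∀ n : ℕ, 2 ≤ n → G n = a * G (n-1) + b * G (n-2) + c * d^n)
    (H0 H1 : ℝ) (hH0 : H0 = G 0 - p) (hH1 : H1 = G 1 - p*d)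
    (h : ℕ → ℝ) (hh0 : h 0 = 0) (hh1 : h 1 = 1)
    (hhrec : ∀ n : ℕ, 2 ≤ n → h n = a * h (n-1) + b * h (n-2)) :
    ∀ n u v : ℕ,
      G (n+u) * G (n+v) - G (n+u+v) * G n
        = (-b)^n * (H1 - H0*α) * (H1 - H0*β) * h u * h v
          + p * d^(n+u+v) *
            (G (n+u) * d^(-(u:ℤ)) + G (n+v) * d^(-(v:ℤ))
              - G (n+u+v) * d^(-(u:ℤ)-(v:ℤ)) - G n) :=
  stmt_3_general a b c d hb hd hden α β p hα hβ hp G hG H0 H1 hH0 hH1 h hh0 hh1 hhrec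
end

section
/- (Closed form for the alternating sum of even-indexed terms) For every even natural number n: Σ_{k=0}^{n/2} (−1)^k·G(2k) = (1/(a² + (b+1)²)) · ( (−1)^(n/2)·(G(n+2) + b²·G n) + G 0 + b²·G₋₂ − c·((d² + a·d − b)/(d² + 1))·((−1)^(n/2)·d^(n+2) + 1) ). -/
theorem stmt_5 (a b c d : ℝ) (ha : 0 < a) (hb : 0 < b) (hc : 0 ≤ c) (hd : 0 ≤ d)
    (hden : d^2 - a*d - b ≠ 0)
    (α β : ℝ)
    (hα : α = (a + Real.sqrt (a^2 + 4*b)) / 2)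
    (hβ : β = (a - Real.sqrt (a^2 + 4*b)) / 2)
    (G : ℕ → ℝ)
    (hG : ∀ n : ℕ, 2 ≤ n → G n = a * G (n-1) + b * G (n-2) + c * d^n)
    (Gm2 : ℝ)
    (hGm2 : Gm2 = ((a^2 + b) * G 0 - a * G 1 + c * (a*d - b)) / b^2) :
    ∀ n : ℕ, Even n →
      ∑ k ∈ Finset.range (n/2 + 1), (-1:ℝ)^k * G (2*k)
        = (1 / (a^2 + (b+1)^2)) *
          ((-1:ℝ)^(n/2) * (G (n+2) + b^2 * G n) + G 0 + b^2 * Gm2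
            - c * ((d^2 + a*d - b) / (d^2 + 1)) * ((-1:ℝ)^(n/2) * d^(n+2) + 1)) := by
  have hD : a^2 + (b+1)^2 ≠ 0 := by nlinarith [sq_nonneg (b+1), mul_pos ha ha]
  have hd1 : d^2 + 1 ≠ 0 := by positivity
  have hb' : b ≠ 0 := ne_of_gt hb
  have key : ∀ m : ℕ, ∑ k ∈ Finset.range (m + 1), (-1:ℝ)^k * G (2*k)
      = (1 / (a^2 + (b+1)^2)) *
          ((-1:ℝ)^m * (G (2*m+2) + b^2 * G (2*m)) + G 0 + b^2 * Gm2
            - c * ((d^2 + a*d - b) / (d^2 + 1)) * ((-1:ℝ)^m * d^(2*m+2) + 1)) := by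
    intro m
    induction m with
    | zero =>
      have h2 := hG 2 (by norm_num)
      norm_num at h2 ⊢
      rw [h2, hGm2]
      field_simp
      ring
    | succ m ih =>
      rw [Finset.sum_range_succ, ih]
      have h4 := hG (2*m+4) (by omega)
      have h3 := hG (2*m+3) (by omega)
      have h2 := hG (2*m+2) (by omega)
      simp only [show 2*m+4-1 = 2*m+3 from by omega, show 2*m+4-2 = 2*m+2 from by omega] at h4
      simp only [show 2*m+3-1 = 2*m+2 from by omega, show 2*m+3-2 = 2*m+1 from by omega] at h3
      simp only [show 2*m+2-1 = 2*m+1 from by omega, show 2*m+2-2 = 2*m from by omega] at h2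
      have e1 : 2*(m+1) = 2*m+2 := by ring
      have e2 : 2*m+2+2 = 2*m+4 := by omega
      rw [e1]; rw [e2, h4, h3, h2]
      field_simp
      ring
  intro n hn
  obtain ⟨m, rfl⟩ := hn
  have h2m : (m + m) / 2 = m := by omega
  rw [h2m, show m + m = 2*m from (two_mul m).symm]
  exact key m
end

section
/- (Closed form for the alternating sum of odd-indexed terms) For every odd natural number n: Σ_{k=0}^{(n−1)/2} (−1)^k·G(2k+1) = (1/(a² + (b+1)²)) · ( (−1)^((n−1)/2)·(G(n+2) + b²·G n) + G 1 + b²·G₋₁ − c·((d² + a·d − b)/(d² + 1))·((−1)^((n−1)/2)·d^(n+2) + d) ). -/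
theorem stmt_6 (a b c d : ℝ) (ha : 0 < a) (hb : 0 < b) (hc : 0 ≤ c) (hd : 0 ≤ d)
    (hden : d^2 - a*d - b ≠ 0)
    (α β : ℝ)
    (hα : α = (a + Real.sqrt (a^2 + 4*b)) / 2)
    (hβ : β = (a - Real.sqrt (a^2 + 4*b)) / 2)
    (G : ℕ → ℝ)
    (hG : ∀ n : ℕ, 2 ≤ n → G n = a * G (n-1) + b * G (n-2) + c * d^n)
    (Gm1 : ℝ)
    (hGm1 : Gm1 = (G 1 - a * G 0 - c*d) / b) :
    ∀ n : ℕ, Odd n →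
      ∑ k ∈ Finset.range ((n-1)/2 + 1), (-1:ℝ)^k * G (2*k+1)
        = (1 / (a^2 + (b+1)^2)) *
          ((-1:ℝ)^((n-1)/2) * (G (n+2) + b^2 * G n) + G 1 + b^2 * Gm1
            - c * ((d^2 + a*d - b) / (d^2 + 1)) * ((-1:ℝ)^((n-1)/2) * d^(n+2) + d)) := by
  have hb' : b ≠ 0 := ne_of_gt hb
  have hD : a^2 + (b+1)^2 ≠ 0 := by positivity
  have hd1 : (d:ℝ)^2 + 1 ≠ 0 := by positivity
  have hrec : ∀ k : ℕ, G (k+2) = a * G (k+1) + b * G k + c * d^(k+2) := by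
    intro k
    have := hG (k+2) (by omega)
    simpa using this
  have key : ∀ m : ℕ, ∑ k ∈ Finset.range (m+1), (-1:ℝ)^k * G (2*k+1)
      = (1 / (a^2 + (b+1)^2)) *
        ((-1:ℝ)^m * (G (2*m+3) + b^2 * G (2*m+1)) + G 1 + b^2 * Gm1
          - c * ((d^2 + a*d - b) / (d^2 + 1)) * ((-1:ℝ)^m * d^(2*m+3) + d)) := by
    intro m
    induction m with
    | zero =>
      have h2 : G 2 = a * G 1 + b * G 0 + c * d^2 := by simpa using hrec 0
      have h3 : G 3 = a * G 2 + b * G 1 + c * d^3 := by simpa using hrec 1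
      simp only [Finset.sum_range_one, pow_zero, one_mul, Nat.mul_zero, Nat.zero_add]
      rw [h3, h2, hGm1]
      field_simp
      ring
    | succ m ih =>
      have h5 : G (2*m+5) = a * G (2*m+4) + b * G (2*m+3) + c * d^(2*m+5) := by
        simpa [show 2*m+3+2 = 2*m+5 from by ring, show 2*m+3+1 = 2*m+4 from by ring]
          using hrec (2*m+3)
      have h4 : G (2*m+4) = a * G (2*m+3) + b * G (2*m+2) + c * d^(2*m+4) := by
        simpa [show 2*m+2+2 = 2*m+4 from by ring, show 2*m+2+1 = 2*m+3 from by ring]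
          using hrec (2*m+2)
      have h3 : G (2*m+3) = a * G (2*m+2) + b * G (2*m+1) + c * d^(2*m+3) := by
        simpa [show 2*m+1+2 = 2*m+3 from by ring, show 2*m+1+1 = 2*m+2 from by ring]
          using hrec (2*m+1)
      rw [Finset.sum_range_succ, ih]
      have e1 : 2*(m+1)+3 = 2*m+5 := by ring
      have e2 : 2*(m+1)+1 = 2*m+3 := by ring
      rw [e1, e2, h5, h4, h3]
      field_simp
      ring
  intro n hn
  obtain ⟨m, hm⟩ := hn
  have h1 : (n-1)/2 = m := by omega
  have h2 : n + 2 = 2*m+3 := by omega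
  have h3 : n = 2*m+1 := by omega
  rw [h1, h2, h3]
  exact key m
end

section
/- Assume |α| < 1, |β| < 1 and d < 1. Then the alternating partial sums converge: as k → ∞, Σ_{j=0}^{k} (−1)^j·G(2j) tends to ( G 0 + b²·G₋₂ − c·(d² + a·d − b)/(d² + 1) ) / (a² + (b+1)²), and Σ_{j=0}^{k} (−1)^j·G(2j+1) tends to ( G 1 + b²·G₋₁ − c·d·(d² + a·d − b)/(d² + 1) ) / (a² + (b+1)²). -/
/-!
Since `α < 1` forces `a + b < 1`, summing `|G (n+2)| ≤ a |G (n+1)| + b |G n| + |c| |d|^(n+2)`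
bounds the partial sums of `|G|`, so `G` is absolutely summable and both alternating subseries
converge, to `Sₑ` and `Sₒ` say. Multiplying the recurrence at even and at odd indices by
alternating signs and summing gives the linear system
`(1 + b) Sₑ + a Sₒ = G 0 - c d² / (1 + d²)`,
`(1 + b) Sₒ - a Sₑ = G 1 - a G 0 - c d³ / (1 + d²)`,
whose determinant is `a² + (b + 1)²`.
-/

open Filter Finset

theorem add_lt_one_of_root_lt_one {a b : ℝ} (h : (a + Real.sqrt (a ^ 2 + 4 * b)) / 2 < 1) :
    a + b < 1 := by
  have hs := Real.sqrt_nonneg (a ^ 2 + 4 * b)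
  rcases le_or_gt 0 (a ^ 2 + 4 * b) with hpos | hneg
  · nlinarith [Real.sq_sqrt hpos]
  · nlinarith [sq_nonneg (a - 2)]

theorem summable_of_le_two_step {h e : ℕ → ℝ} {a b : ℝ} (ha : 0 ≤ a) (hb : 0 ≤ b)
    (hab : a + b < 1) (h_nonneg : ∀ n, 0 ≤ h n) (he_nonneg : ∀ n, 0 ≤ e n) (he : Summable e)
    (hrec : ∀ n, h (n + 2) ≤ a * h (n + 1) + b * h n + e n) : Summable h := by
  set H := fun n => ∑ i ∈ range n, h i
  have hmono : Monotone H := fun m n hmn =>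
    sum_le_sum_of_subset_of_nonneg (range_mono hmn) fun i _ _ => h_nonneg i
  have hbound (n : ℕ) : H (n + 2) ≤ h 0 + h 1 + (a + b) * H (n + 2) + ∑' i, e i := calc
    H (n + 2) = ∑ i ∈ range n, h (i + 2) + h 1 + h 0 := by simp only [H, sum_range_succ']
    _ ≤ ∑ i ∈ range n, (a * h (i + 1) + b * h i + e i) + h 1 + h 0 := by
      gcongr with i; exact hrec i
    _ = a * (H (n + 1) - h 0) + b * H n + ∑ i ∈ range n, e i + h 1 + h 0 := by
      simp only [H, sum_range_succ', sum_add_distrib, ← mul_sum]; ring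
    _ ≤ h 0 + h 1 + (a + b) * H (n + 2) + ∑' i, e i := by
      have he_le := he.sum_le_tsum (range n) fun i _ => he_nonneg i
      have hH₁ := hmono (show n + 1 ≤ n + 2 by omega)
      have hH₀ := hmono (show n ≤ n + 2 by omega)
      nlinarith [h_nonneg 0]
  refine summable_of_sum_range_le h_nonneg (c := (h 0 + h 1 + ∑' i, e i) / (1 - (a + b)))
    fun n => ?_
  rw [le_div_iff₀ (by linarith)]
  nlinarith [hbound n, hmono (show n ≤ n + 2 by omega)]

theorem summable_of_recurrence {a b c d : ℝ} {G : ℕ → ℝ} (ha : 0 ≤ a) (hb : 0 ≤ b)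
    (hab : a + b < 1) (hd : |d| < 1)
    (hrec : ∀ n, G (n + 2) = a * G (n + 1) + b * G n + c * d ^ (n + 2)) : Summable G := by
  have hforcing : Summable fun n => |c * d ^ (n + 2)| :=
    (((summable_nat_add_iff 2).mpr (summable_geometric_of_abs_lt_one hd)).mul_left c).abs
  refine summable_abs_iff.mp <| summable_of_le_two_step ha hb hab (fun _ => abs_nonneg _)
    (fun _ => abs_nonneg _) hforcing fun n => ?_
  calc |G (n + 2)| ≤ |a * G (n + 1)| + |b * G n| + |c * d ^ (n + 2)| := by
        rw [hrec]; exact abs_add_three _ _ _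
    _ = a * |G (n + 1)| + b * |G n| + |c * d ^ (n + 2)| := by
        rw [abs_mul, abs_mul, abs_of_nonneg ha, abs_of_nonneg hb]

theorem summable_neg_one_pow_mul_comp {f : ℕ → ℝ} (hf : Summable f) {i : ℕ → ℕ}
    (hi : Function.Injective i) : Summable fun j => (-1 : ℝ) ^ j * f (i j) :=
  summable_abs_iff.mp <| by
    simpa [abs_mul, Function.comp_def] using (summable_abs_iff.mpr hf).comp_injective hi

theorem hasSum_neg_sq_pow {d : ℝ} (hd : |d| < 1) :
    HasSum (fun j => (-d ^ 2) ^ j) (1 + d ^ 2)⁻¹ := by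
  have hd2 : |-d ^ 2| < 1 := by
    rw [abs_neg, abs_pow]; exact pow_lt_one₀ (abs_nonneg d) hd two_ne_zero
  simpa using hasSum_geometric_of_abs_lt_one hd2

theorem hasSum_alternating_even_shift {G : ℕ → ℝ} {Se : ℝ}
    (he : HasSum (fun j => (-1 : ℝ) ^ j * G (2 * j)) Se) :
    HasSum (fun j => (-1 : ℝ) ^ (j + 1) * G (2 * j + 2)) (Se - G 0) := by
  simpa using ((hasSum_nat_add_iff' 1).mpr he).congr_fun fun j => by ring_nf

theorem even_alternating_sum_relation {a b c d Se So : ℝ} {G : ℕ → ℝ}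
    (hrec : ∀ n, G (n + 2) = a * G (n + 1) + b * G n + c * d ^ (n + 2)) (hd : |d| < 1)
    (he : HasSum (fun j => (-1 : ℝ) ^ j * G (2 * j)) Se)
    (ho : HasSum (fun j => (-1 : ℝ) ^ j * G (2 * j + 1)) So) :
    (1 + b) * Se + a * So = G 0 - c * d ^ 2 / (1 + d ^ 2) := by
  have hrhs : HasSum (fun j => (-1 : ℝ) ^ (j + 1) * G (2 * j + 2))
      (-a * So + -b * Se + -(c * d ^ 2) * (1 + d ^ 2)⁻¹) := by
    refine (((ho.mul_left (-a)).add (he.mul_left (-b))).add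
      ((hasSum_neg_sq_pow hd).mul_left (-(c * d ^ 2)))).congr_fun fun j => ?_
    rw [hrec, neg_pow (d ^ 2), ← pow_mul]
    ring
  linear_combination (hasSum_alternating_even_shift he).unique hrhs

theorem odd_alternating_sum_relation {a b c d Se So : ℝ} {G : ℕ → ℝ}
    (hrec : ∀ n, G (n + 2) = a * G (n + 1) + b * G n + c * d ^ (n + 2)) (hd : |d| < 1)
    (he : HasSum (fun j => (-1 : ℝ) ^ j * G (2 * j)) Se)
    (ho : HasSum (fun j => (-1 : ℝ) ^ j * G (2 * j + 1)) So) :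
    (1 + b) * So - a * Se = G 1 - a * G 0 - c * d ^ 3 / (1 + d ^ 2) := by
  have hshift : HasSum (fun j => (-1 : ℝ) ^ (j + 1) * G (2 * j + 3)) (So - G 1) := by
    simpa using ((hasSum_nat_add_iff' 1).mpr ho).congr_fun fun j => by ring_nf
  have hrhs : HasSum (fun j => (-1 : ℝ) ^ (j + 1) * G (2 * j + 3))
      (a * (Se - G 0) + -b * So + -(c * d ^ 3) * (1 + d ^ 2)⁻¹) := by
    refine ((((hasSum_alternating_even_shift he).mul_left a).add (ho.mul_left (-b))).add
      ((hasSum_neg_sq_pow hd).mul_left (-(c * d ^ 3)))).congr_fun fun j => ?_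
    rw [hrec, neg_pow (d ^ 2), ← pow_mul]
    ring
  linear_combination hshift.unique hrhs

theorem stmt_7_general (a b c d : ℝ) (ha : 0 < a) (hb : 0 < b) (hd : 0 ≤ d)
    (α : ℝ)
    (hα : α = (a + Real.sqrt (a^2 + 4*b)) / 2)
    (hαlt : |α| < 1) (hdlt : d < 1)
    (G : ℕ → ℝ)
    (hG : ∀ n : ℕ, 2 ≤ n → G n = a * G (n-1) + b * G (n-2) + c * d^n)
    (Gm1 Gm2 : ℝ)
    (hGm1 : Gm1 = (G 1 - a * G 0 - c*d) / b)
    (hGm2 : Gm2 = ((a^2 + b) * G 0 - a * G 1 + c * (a*d - b)) / b^2) :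
    Filter.Tendsto (fun k : ℕ => ∑ j ∈ Finset.range (k+1), (-1:ℝ)^j * G (2*j))
        Filter.atTop
        (nhds ((G 0 + b^2 * Gm2 - c * (d^2 + a*d - b) / (d^2 + 1)) / (a^2 + (b+1)^2)))
    ∧ Filter.Tendsto (fun k : ℕ => ∑ j ∈ Finset.range (k+1), (-1:ℝ)^j * G (2*j+1))
        Filter.atTop
        (nhds ((G 1 + b^2 * Gm1 - c * d * (d^2 + a*d - b) / (d^2 + 1)) / (a^2 + (b+1)^2))) := by
  have hab : a + b < 1 := add_lt_one_of_root_lt_one (hα ▸ (le_abs_self α).trans_lt hαlt)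
  have hd1 : |d| < 1 := abs_lt.mpr ⟨by linarith, hdlt⟩
  have hrec (n : ℕ) : G (n + 2) = a * G (n + 1) + b * G n + c * d ^ (n + 2) :=
    hG (n + 2) le_add_self
  have hsum := summable_of_recurrence ha.le hb.le hab hd1 hrec
  obtain ⟨Se, he⟩ : Summable fun j => (-1 : ℝ) ^ j * G (2 * j) :=
    summable_neg_one_pow_mul_comp hsum (mul_right_injective₀ two_ne_zero)
  obtain ⟨So, ho⟩ : Summable fun j => (-1 : ℝ) ^ j * G (2 * j + 1) :=
    summable_neg_one_pow_mul_comp hsum fun _ _ h => by simpa using h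
  have h1 := even_alternating_sum_relation hrec hd1 he ho
  have h2 := odd_alternating_sum_relation hrec hd1 he ho
  field_simp at h1 h2
  have hD : a ^ 2 + (b + 1) ^ 2 ≠ 0 := by positivity
  have hSe : Se = (G 0 + b^2 * Gm2 - c * (d^2 + a*d - b) / (d^2 + 1)) / (a^2 + (b+1)^2) := by
    rw [hGm2, eq_div_iff hD]
    field_simp
    linear_combination (1 + b) * h1 - a * h2
  have hSo : So = (G 1 + b^2 * Gm1 - c * d * (d^2 + a*d - b) / (d^2 + 1)) / (a^2 + (b+1)^2) := by
    rw [hGm1, eq_div_iff hD]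
    field_simp
    linear_combination a * h1 + (1 + b) * h2
  exact ⟨hSe ▸ he.tendsto_sum_nat.comp (tendsto_add_atTop_nat 1),
    hSo ▸ ho.tendsto_sum_nat.comp (tendsto_add_atTop_nat 1)⟩

theorem stmt_7 (a b c d : ℝ) (ha : 0 < a) (hb : 0 < b) (hc : 0 ≤ c) (hd : 0 ≤ d)
    (hden : d^2 - a*d - b ≠ 0)
    (α β : ℝ)
    (hα : α = (a + Real.sqrt (a^2 + 4*b)) / 2)
    (hβ : β = (a - Real.sqrt (a^2 + 4*b)) / 2)
    (hαlt : |α| < 1) (hβlt : |β| < 1) (hdlt : d < 1)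
    (G : ℕ → ℝ)
    (hG : ∀ n : ℕ, 2 ≤ n → G n = a * G (n-1) + b * G (n-2) + c * d^n)
    (Gm1 Gm2 : ℝ)
    (hGm1 : Gm1 = (G 1 - a * G 0 - c*d) / b)
    (hGm2 : Gm2 = ((a^2 + b) * G 0 - a * G 1 + c * (a*d - b)) / b^2) :
    Filter.Tendsto (fun k : ℕ => ∑ j ∈ Finset.range (k+1), (-1:ℝ)^j * G (2*j))
        Filter.atTop
        (nhds ((G 0 + b^2 * Gm2 - c * (d^2 + a*d - b) / (d^2 + 1)) / (a^2 + (b+1)^2)))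
    ∧ Filter.Tendsto (fun k : ℕ => ∑ j ∈ Finset.range (k+1), (-1:ℝ)^j * G (2*j+1))
        Filter.atTop
        (nhds ((G 1 + b^2 * Gm1 - c * d * (d^2 + a*d - b) / (d^2 + 1)) / (a^2 + (b+1)^2))) :=
  stmt_7_general a b c d ha hb hd α hα hαlt hdlt G hG Gm1 Gm2 hGm1 hGm2
end

section
/- (Alternating even/odd-indexed sums of Horadam numbers) For every even natural number n: Σ_{k=0}^{n/2} (−1)^k·H(2k) = (1/(a² + (b+1)²))·( (−1)^(n/2)·(H(n+2) + b²·H n) + H 0 + b²·H₋₂ ), and for every odd natural number n: Σ_{k=0}^{(n−1)/2} (−1)^k·H(2k+1) = (1/(a² + (b+1)²))·( (−1)^((n−1)/2)·(H(n+2) + b²·H n) + H 1 + b²·H₋₁ ). -/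
/-!
Squaring the companion matrix of the recurrence, each of the subsequences `H (2k)` and
`H (2k + 1)` satisfies `u (k + 2) = (a² + 2b) u (k + 1) - b² u k`. For any such `u`, with
`v k = u (k + 1) + q u k` one has `v k + v (k - 1) = (p + q + 1) u k`, so the alternating sum of `u`
telescopes; here `p + q + 1 = a² + (b + 1)²`.
-/

theorem mul_sum_range_neg_one_pow_mul_of_recurrence {R : Type*} [CommRing R] (u : ℕ → R)
    (p q : R) (hu : ∀ k, u (k + 2) = p * u (k + 1) - q * u k) (m : ℕ) :
    (p + q + 1) * ∑ k ∈ Finset.range (m + 1), (-1) ^ k * u k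
      = (-1) ^ m * (u (m + 1) + q * u m) + (p + 1) * u 0 - u 1 := by
  induction m with
  | zero =>
    rw [zero_add, Finset.sum_range_one]
    ring
  | succ m ih =>
    rw [Finset.sum_range_succ, mul_add, ih, hu m]
    ring

theorem horadam_add_four {a b : ℝ} {H : ℕ → ℝ}
    (hH : ∀ n, H (n + 2) = a * H (n + 1) + b * H n) (n : ℕ) :
    H (n + 4) = (a ^ 2 + 2 * b) * H (n + 2) - b ^ 2 * H n := by
  linear_combination hH (n + 2) + a * hH (n + 1) - b * hH n

theorem stmt_8_general (a b : ℝ) (hb : 0 < b)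
    (H : ℕ → ℝ)
    (hH : ∀ n : ℕ, 2 ≤ n → H n = a * H (n-1) + b * H (n-2))
    (Hm1 Hm2 : ℝ)
    (hHm1 : Hm1 = (H 1 - a * H 0) / b)
    (hHm2 : Hm2 = ((a^2 + b) * H 0 - a * H 1) / b^2) :
    (∀ n : ℕ, Even n →
      ∑ k ∈ Finset.range (n/2 + 1), (-1:ℝ)^k * H (2*k)
        = (1 / (a^2 + (b+1)^2)) *
          ((-1:ℝ)^(n/2) * (H (n+2) + b^2 * H n) + H 0 + b^2 * Hm2))
    ∧ (∀ n : ℕ, Odd n →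
      ∑ k ∈ Finset.range ((n-1)/2 + 1), (-1:ℝ)^k * H (2*k+1)
        = (1 / (a^2 + (b+1)^2)) *
          ((-1:ℝ)^((n-1)/2) * (H (n+2) + b^2 * H n) + H 1 + b^2 * Hm1)) := by
  have hrec (n : ℕ) : H (n + 2) = a * H (n + 1) + b * H n := by simpa using hH (n + 2) (by omega)
  have hstep (r k : ℕ) : H (2 * (k + 2) + r)
      = (a ^ 2 + 2 * b) * H (2 * (k + 1) + r) - b ^ 2 * H (2 * k + r) := by
    rw [show 2 * (k + 2) + r = 2 * k + r + 4 by ring, show 2 * (k + 1) + r = 2 * k + r + 2 by ring]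
    exact horadam_add_four hrec _
  have h2 : H 2 = a * H 1 + b * H 0 := hrec 0
  have h3 : H 3 = a * H 2 + b * H 1 := hrec 1
  have hD : a ^ 2 + (b + 1) ^ 2 ≠ 0 := by positivity
  constructor
  · rintro n ⟨m, rfl⟩
    have hsum :=
      mul_sum_range_neg_one_pow_mul_of_recurrence (fun k => H (2 * k + 0)) _ _ (hstep 0) m
    simp only [add_zero, mul_zero, mul_one] at hsum
    rw [show (m + m) / 2 = m by omega, show m + m + 2 = 2 * (m + 1) by ring,
      show m + m = 2 * m by ring, hHm2]
    field_simp
    linear_combination hsum - h2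
  · rintro n ⟨m, rfl⟩
    have hsum :=
      mul_sum_range_neg_one_pow_mul_of_recurrence (fun k => H (2 * k + 1)) _ _ (hstep 1) m
    simp only [mul_zero, mul_one, zero_add] at hsum
    rw [show (2 * m + 1 - 1) / 2 = m by omega, show 2 * m + 1 + 2 = 2 * (m + 1) + 1 by ring, hHm1]
    field_simp
    linear_combination hsum - h3 - a * h2

theorem stmt_8 (a b : ℝ) (ha : 0 < a) (hb : 0 < b)
    (H : ℕ → ℝ)
    (hH : ∀ n : ℕ, 2 ≤ n → H n = a * H (n-1) + b * H (n-2))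
    (Hm1 Hm2 : ℝ)
    (hHm1 : Hm1 = (H 1 - a * H 0) / b)
    (hHm2 : Hm2 = ((a^2 + b) * H 0 - a * H 1) / b^2) :
    (∀ n : ℕ, Even n →
      ∑ k ∈ Finset.range (n/2 + 1), (-1:ℝ)^k * H (2*k)
        = (1 / (a^2 + (b+1)^2)) *
          ((-1:ℝ)^(n/2) * (H (n+2) + b^2 * H n) + H 0 + b^2 * Hm2))
    ∧ (∀ n : ℕ, Odd n →
      ∑ k ∈ Finset.range ((n-1)/2 + 1), (-1:ℝ)^k * H (2*k+1)
        = (1 / (a^2 + (b+1)^2)) *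
          ((-1:ℝ)^((n-1)/2) * (H (n+2) + b^2 * H n) + H 1 + b^2 * Hm1)) :=
  stmt_8_general a b hb H hH Hm1 Hm2 hHm1 hHm2
end

section
/- (Proposition: orthogonal asymptotes of directional corner points) Let γ = max(α, d), assume γ ≠ 1, and assume either (d < α and A ≠ 0) or (α < d and p ≠ 0). Then as n → ∞ along even n ≥ 2 the slope (Y(n+4) − Y n)/(X(n+4) − X n) = (Γ(n+3) − Γ(n−1))/(Γ(n+4) − Γ n) tends to −1/γ, and as n → ∞ along odd n the slope (Y(n+4) − Y n)/(X(n+4) − X n) = (Γ(n+4) − Γ n)/(Γ(n+3) − Γ(n−1)) tends to γ; in particular the product of the two limiting slopes equals −1, so the oblique asymptotes through the even-indexed and the odd-indexed directional corner points are mutually orthogonal. -/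
/-!
Solving the recurrence gives `G n = A α^n + B β^n + p d^n` with `|β| < α`, so the differences
`G (n + 2) - G n` grow like `C γ^n` with `C ≠ 0` (the case hypothesis and `γ ≠ 1` make the
coefficient of `γ^n` nonzero), and consecutive differences have ratio tending to `γ`.
The increments `Γ (n + 4) - Γ n` of the alternating sums are, up to the sign `±1`, single
differences `G (k + 2) - G k`, so both slopes are ratios of consecutive differences.
-/

open Filter Topology Finset

lemma sub_eq_of_eq_sum_alternating {S f : ℕ → ℝ}
    (hS : ∀ m, S m = ∑ k ∈ range (m + 1), (-1 : ℝ) ^ k * f k) (m : ℕ) :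
    S (m + 2) - S m = (-1) ^ m * (f (m + 2) - f (m + 1)) := by
  simp only [hS, sum_range_succ]
  ring

lemma sub_odd_eq_of_eq_sum_alternating {Γ G : ℕ → ℝ}
    (hΓ : ∀ n, Odd n → Γ n = ∑ k ∈ range ((n - 1) / 2 + 1), (-1 : ℝ) ^ k * G (2 * k + 1))
    (m : ℕ) : Γ (2 * m + 5) - Γ (2 * m + 1) = (-1) ^ m * (G (2 * m + 5) - G (2 * m + 3)) := by
  have hS (m : ℕ) : Γ (2 * m + 1) = ∑ k ∈ range (m + 1), (-1 : ℝ) ^ k * G (2 * k + 1) := by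
    rw [hΓ _ (odd_two_mul_add_one m)]
    congr 2
    omega
  have h := sub_eq_of_eq_sum_alternating hS m
  ring_nf at h ⊢
  exact h

lemma sub_even_eq_of_eq_sum_alternating {Γ G : ℕ → ℝ}
    (hΓ : ∀ n, Even n → Γ n = ∑ k ∈ range (n / 2 + 1), (-1 : ℝ) ^ k * G (2 * k))
    (m : ℕ) : Γ (2 * m + 4) - Γ (2 * m) = (-1) ^ m * (G (2 * m + 4) - G (2 * m + 2)) := by
  have hS (m : ℕ) : Γ (2 * m) = ∑ k ∈ range (m + 1), (-1 : ℝ) ^ k * G (2 * k) := by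
    rw [hΓ _ (even_two_mul m)]
    congr 2
    omega
  have h := sub_eq_of_eq_sum_alternating hS m
  ring_nf at h ⊢
  exact h

lemma tendsto_pow_div_pow_of_abs_lt {x γ : ℝ} (hx : |x| < γ) :
    Tendsto (fun n : ℕ => x ^ n / γ ^ n) atTop (𝓝 0) := by
  have hγ : 0 < γ := (abs_nonneg x).trans_lt hx
  simp_rw [← div_pow]
  exact tendsto_pow_atTop_nhds_zero_of_abs_lt_one
    (by rwa [abs_div, abs_of_pos hγ, div_lt_one hγ])

lemma tendsto_div_pow_of_abs_lt {γ x y C Cx Cy : ℝ} (hx : |x| < γ) (hy : |y| < γ) :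
    Tendsto (fun n : ℕ => (C * γ ^ n + Cx * x ^ n + Cy * y ^ n) / γ ^ n) atTop (𝓝 C) := by
  have hγ : γ ≠ 0 := ((abs_nonneg x).trans_lt hx).ne'
  have h := (((tendsto_pow_div_pow_of_abs_lt hx).const_mul Cx).const_add C).add
    ((tendsto_pow_div_pow_of_abs_lt hy).const_mul Cy)
  rw [mul_zero, mul_zero, add_zero, add_zero] at h
  refine h.congr fun n => ?_
  field_simp

lemma tendsto_succ_div_of_tendsto_div_pow {u : ℕ → ℝ} {γ C : ℝ} (hγ : γ ≠ 0) (hC : C ≠ 0)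
    (h : Tendsto (fun n => u n / γ ^ n) atTop (𝓝 C)) :
    Tendsto (fun n => u (n + 1) / u n) atTop (𝓝 γ) := by
  have h' := ((h.comp (tendsto_add_atTop_nat 1)).mul_const γ).div h hC
  rw [mul_div_cancel_left₀ γ hC] at h'
  refine h'.congr fun n => ?_
  rcases eq_or_ne (u n) 0 with hu | hu
  · simp [hu]
  · simp only [Pi.div_apply, Function.comp_apply, pow_succ]
    field_simp

lemma eq_add_pow_of_recurrence {a b c d α β p A B : ℝ} {G : ℕ → ℝ}
    (hα : α ^ 2 = a * α + b) (hβ : β ^ 2 = a * β + b)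
    (hp : p * d ^ 2 = a * (p * d) + b * p + c * d ^ 2)
    (hG : ∀ n, G (n + 2) = a * G (n + 1) + b * G n + c * d ^ (n + 2))
    (h0 : G 0 = A + B + p) (h1 : G 1 = A * α + B * β + p * d) (n : ℕ) :
    G n = A * α ^ n + B * β ^ n + p * d ^ n := by
  induction n using Nat.twoStepInduction with
  | zero => simpa using h0
  | one => simpa using h1
  | more n ih0 ih1 =>
    rw [hG, ih0, ih1]
    linear_combination -(A * α ^ n * hα + B * β ^ n * hβ + d ^ n * hp)

lemma quadratic_roots_of_pos {a b α β : ℝ} (ha : 0 < a) (hb : 0 < b)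
    (hα : α = (a + √(a ^ 2 + 4 * b)) / 2) (hβ : β = (a - √(a ^ 2 + 4 * b)) / 2) :
    α ^ 2 = a * α + b ∧ β ^ 2 = a * β + b ∧ |β| < α := by
  have hs : √(a ^ 2 + 4 * b) ^ 2 = a ^ 2 + 4 * b := Real.sq_sqrt (by positivity)
  have hs_pos : 0 < √(a ^ 2 + 4 * b) := Real.sqrt_pos.mpr (by positivity)
  subst hα hβ
  refine ⟨by linear_combination hs / 4, by linear_combination hs / 4, abs_lt.mpr ⟨?_, ?_⟩⟩ <;>
    linarith

lemma exists_tendsto_sub_div_max_pow {α β d A B p : ℝ} {G : ℕ → ℝ}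
    (hG : ∀ n, G n = A * α ^ n + B * β ^ n + p * d ^ n) (hβα : |β| < α) (hd : 0 ≤ d)
    (h1 : max α d ≠ 1) (hcase : (d < α ∧ A ≠ 0) ∨ (α < d ∧ p ≠ 0)) :
    ∃ C ≠ 0, Tendsto (fun n => (G (n + 2) - G n) / max α d ^ n) atTop (𝓝 C) := by
  have hα : 0 < α := (abs_nonneg β).trans_lt hβα
  have sq_sub_one_ne {x : ℝ} (hx : 0 < x) (hx1 : x ≠ 1) : x ^ 2 - 1 ≠ 0 :=
    sub_ne_zero.mpr fun h => hx1 ((pow_eq_one_iff_of_nonneg hx.le two_ne_zero).mp h)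
  rcases hcase with ⟨hdα, hA⟩ | ⟨hαd, hp⟩
  · rw [max_eq_left hdα.le] at h1 ⊢
    refine ⟨A * (α ^ 2 - 1), mul_ne_zero hA (sq_sub_one_ne hα h1), ?_⟩
    convert tendsto_div_pow_of_abs_lt (C := A * (α ^ 2 - 1)) (Cx := B * (β ^ 2 - 1))
      (Cy := p * (d ^ 2 - 1)) hβα (by rwa [abs_of_nonneg hd]) using 2 with n
    rw [hG, hG]
    ring
  · rw [max_eq_right hαd.le] at h1 ⊢
    refine ⟨p * (d ^ 2 - 1), mul_ne_zero hp (sq_sub_one_ne (hα.trans hαd) h1), ?_⟩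
    convert tendsto_div_pow_of_abs_lt (C := p * (d ^ 2 - 1)) (Cx := A * (α ^ 2 - 1))
      (Cy := B * (β ^ 2 - 1)) (by rwa [abs_of_pos hα]) (hβα.trans hαd) using 2 with n
    rw [hG, hG]
    ring

theorem stmt_10_general (a b c d : ℝ) (ha : 0 < a) (hb : 0 < b) (hd : 0 ≤ d)
    (hden : d^2 - a*d - b ≠ 0)
    (α β p : ℝ)
    (hα : α = (a + Real.sqrt (a^2 + 4*b)) / 2)
    (hβ : β = (a - Real.sqrt (a^2 + 4*b)) / 2)
    (hp : p = c * d^2 / (d^2 - a*d - b))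
    (G : ℕ → ℝ)
    (hG : ∀ n : ℕ, 2 ≤ n → G n = a * G (n-1) + b * G (n-2) + c * d^n)
    (H0 H1 A B : ℝ)
    (hH0 : H0 = G 0 - p) (hH1 : H1 = G 1 - p*d)
    (hA : A = (H1 - H0*β) / (α - β))
    (hB : B = -((H1 - H0*α) / (α - β)))
    (Γ : ℕ → ℝ)
    (hΓeven : ∀ n : ℕ, Even n →
      Γ n = ∑ k ∈ Finset.range (n/2 + 1), (-1:ℝ)^k * G (2*k))
    (hΓodd : ∀ n : ℕ, Odd n →
      Γ n = ∑ k ∈ Finset.range ((n-1)/2 + 1), (-1:ℝ)^k * G (2*k+1))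
    (γ : ℝ) (hγ : γ = max α d) (hγ1 : γ ≠ 1)
    (hcase : (d < α ∧ A ≠ 0) ∨ (α < d ∧ p ≠ 0)) :
    Filter.Tendsto
        (fun m : ℕ => (Γ (2*m+5) - Γ (2*m+1)) / (Γ (2*m+6) - Γ (2*m+2)))
        Filter.atTop (nhds (-1/γ))
    ∧ Filter.Tendsto
        (fun m : ℕ => (Γ (2*m+5) - Γ (2*m+1)) / (Γ (2*m+4) - Γ (2*m)))
        Filter.atTop (nhds γ)
    ∧ (-1/γ) * γ = -1 := by
  obtain ⟨hαsq, hβsq, hβα⟩ := quadratic_roots_of_pos ha hb hα hβ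
  have hαβ : α - β ≠ 0 := sub_ne_zero.mpr ((le_abs_self β).trans_lt hβα).ne'
  have hpd : p * d ^ 2 = a * (p * d) + b * p + c * d ^ 2 := by
    rw [hp]
    linear_combination div_mul_cancel₀ (c * d ^ 2) hden
  have hclosed := eq_add_pow_of_recurrence (A := A) (B := B) hαsq hβsq hpd
    (fun n => by simpa using hG (n + 2) (by omega))
    (by rw [hA, hB, hH0, hH1]; field_simp; ring) (by rw [hA, hB, hH0, hH1]; field_simp; ring)
  obtain ⟨C, hC, hlim⟩ := exists_tendsto_sub_div_max_pow hclosed hβα hd (hγ ▸ hγ1) hcase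
  have hγ0 : γ ≠ 0 := (((abs_nonneg β).trans_lt hβα).trans_le (hγ ▸ le_max_left α d)).ne'
  have hratio := tendsto_succ_div_of_tendsto_div_pow hγ0 hC (hγ ▸ hlim)
  have htwo (k : ℕ) : Tendsto (fun m : ℕ => 2 * m + k) atTop atTop :=
    tendsto_atTop_mono (fun m => by dsimp; omega) tendsto_id
  refine ⟨?_, ?_, div_mul_cancel₀ (-1) hγ0⟩
  · have h := ((hratio.comp (htwo 3)).inv₀ hγ0).neg
    rw [neg_div, one_div]
    refine h.congr fun m => ?_
    rw [Function.comp_apply, inv_div, sub_odd_eq_of_eq_sum_alternating hΓodd,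
      show 2 * m + 6 = 2 * (m + 1) + 4 by ring, show 2 * m + 2 = 2 * (m + 1) by ring,
      sub_even_eq_of_eq_sum_alternating hΓeven, pow_succ, mul_assoc,
      mul_div_mul_left _ _ (neg_one_pow_ne_zero m), neg_one_mul, div_neg]
    ring_nf
  · refine (hratio.comp (htwo 2)).congr fun m => ?_
    rw [Function.comp_apply, sub_odd_eq_of_eq_sum_alternating hΓodd,
      sub_even_eq_of_eq_sum_alternating hΓeven, mul_div_mul_left _ _ (neg_one_pow_ne_zero m)]

theorem stmt_10 (a b c d : ℝ) (ha : 0 < a) (hb : 0 < b) (hc : 0 ≤ c) (hd : 0 ≤ d)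
    (hden : d^2 - a*d - b ≠ 0)
    (α β p : ℝ)
    (hα : α = (a + Real.sqrt (a^2 + 4*b)) / 2)
    (hβ : β = (a - Real.sqrt (a^2 + 4*b)) / 2)
    (hp : p = c * d^2 / (d^2 - a*d - b))
    (G : ℕ → ℝ)
    (hG : ∀ n : ℕ, 2 ≤ n → G n = a * G (n-1) + b * G (n-2) + c * d^n)
    (H0 H1 A B : ℝ)
    (hH0 : H0 = G 0 - p) (hH1 : H1 = G 1 - p*d)
    (hA : A = (H1 - H0*β) / (α - β))
    (hB : B = -((H1 - H0*α) / (α - β)))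
    (Γ : ℕ → ℝ)
    (hΓeven : ∀ n : ℕ, Even n →
      Γ n = ∑ k ∈ Finset.range (n/2 + 1), (-1:ℝ)^k * G (2*k))
    (hΓodd : ∀ n : ℕ, Odd n →
      Γ n = ∑ k ∈ Finset.range ((n-1)/2 + 1), (-1:ℝ)^k * G (2*k+1))
    (γ : ℝ) (hγ : γ = max α d) (hγ1 : γ ≠ 1)
    (hcase : (d < α ∧ A ≠ 0) ∨ (α < d ∧ p ≠ 0)) :
    Filter.Tendsto
        (fun m : ℕ => (Γ (2*m+5) - Γ (2*m+1)) / (Γ (2*m+6) - Γ (2*m+2)))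
        Filter.atTop (nhds (-1/γ))
    ∧ Filter.Tendsto
        (fun m : ℕ => (Γ (2*m+5) - Γ (2*m+1)) / (Γ (2*m+4) - Γ (2*m)))
        Filter.atTop (nhds γ)
    ∧ (-1/γ) * γ = -1 :=
  stmt_10_general a b c d ha hb hd hden α β p hα hβ hp G hG H0 H1 A B hH0 hH1 hA hB Γ hΓeven hΓodd γ
    hγ hγ1 hcase
end

section
/- (Proposition: point of convergence of inwinding rectangular spirals) Assume |α| < 1, |β| < 1 and d < 1. Then the corner points P n = (X n, Y n) converge as n → ∞ to the point P* = (X*, Y*) with X* = ( G 0 + b²·G₋₂ − c·(d² + a·d − b)/(d² + 1) ) / (a² + (b+1)²) and Y* = ( G 1 + b²·G₋₁ − c·d·(d² + a·d − b)/(d² + 1) ) / (a² + (b+1)²). -/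
/-!
The even- and odd-indexed terms of `G`, taken with alternating signs, satisfy
`u (k + 2) + (a² + 2b) u (k + 1) + b² u k = e (-d²)ᵏ` for a constant `e` (apply the recurrence
of `G` twice). Since `α` and `d` lie below some `r < 1`, `G = O(rⁿ)`, so both alternating series
converge absolutely, and summing the recurrence over `k` expresses each sum through
`G 0, …, G 3`, with the factor `1 + (a² + 2b) + b² = a² + (b + 1)²`. The corner points are
partial sums of these series.
-/

open Filter Topology Finset

theorem mul_add_lt_sq_of_root_lt {a b r : ℝ} (hdisc : 0 ≤ a ^ 2 + 4 * b)
    (h : (a + √(a ^ 2 + 4 * b)) / 2 < r) : a * r + b < r ^ 2 := by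
  have hs := Real.sq_sqrt hdisc
  have := Real.sqrt_nonneg (a ^ 2 + 4 * b)
  nlinarith [mul_pos (by linarith : 0 < 2 * r - a - √(a ^ 2 + 4 * b))
    (by linarith : 0 < 2 * r - a + √(a ^ 2 + 4 * b))]

theorem Summable.alternating_subseq {u : ℕ → ℝ} (hu : Summable u) (j : ℕ) :
    Summable fun k => (-1) ^ k * u (2 * k + j) :=
  .of_norm_bounded
    (hu.abs.comp_injective (i := fun k => 2 * k + j) fun x y h => by simp only at h; omega)
    fun k => by simp

theorem HasSum.linear_recurrence {𝕜 : Type*} [Field 𝕜] [TopologicalSpace 𝕜]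
    [IsTopologicalRing 𝕜] [T2Space 𝕜] {u v : ℕ → 𝕜} {p q S T : 𝕜}
    (hu : HasSum u S) (hv : HasSum v T) (h : ∀ k, u (k + 2) + p * u (k + 1) + q * u k = v k) :
    (1 + p + q) * S = (1 + p) * u 0 + u 1 + T := by
  have hsum := (((hasSum_nat_add_iff' 2).2 hu).add
    (((hasSum_nat_add_iff' 1).2 hu).mul_left p)).add (hu.mul_left q)
  simp only [h, sum_range_succ, sum_range_zero] at hsum
  linear_combination hsum.unique hv

theorem tendsto_of_eq_partial_sum {u x : ℕ → ℝ} (hu : Summable u) {m : ℕ → ℕ}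
    (hm : Tendsto m atTop atTop) (hx : ∀ᶠ n in atTop, x n = ∑ k ∈ range (m n), u k) :
    Tendsto x atTop (𝓝 (∑' k, u k)) :=
  (hu.hasSum.tendsto_sum_nat.comp hm).congr' (hx.mono fun _ h => h.symm)

section Recurrence

variable {a b c d : ℝ} {G : ℕ → ℝ}
  (hG : ∀ n, G (n + 2) = a * G (n + 1) + b * G n + c * d ^ (n + 2))
include hG

theorem exists_abs_le_mul_pow_of_recurrence {r : ℝ} (hr : 0 < r) (hdr : |d| ≤ r)
    (habr : |a| * r + |b| < r ^ 2) : ∃ C, ∀ n, |G n| ≤ C * r ^ n := by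
  set δ := r ^ 2 - |a| * r - |b|
  have hδ : 0 < δ := by simp only [δ]; linarith
  set C := max (max |G 0| (|G 1| / r)) (|c| * r ^ 2 / δ)
  have h0 : |G 0| ≤ C := le_max_of_le_left (le_max_left _ _)
  have h1 : |G 1| ≤ C * r := (div_le_iff₀ hr).1 (le_max_of_le_left (le_max_right _ _))
  have hc : |c| * r ^ 2 ≤ C * δ := (div_le_iff₀ hδ).1 (le_max_right _ _)
  refine ⟨C, fun n => ?_⟩
  induction n using Nat.twoStepInduction with
  | zero => simpa using h0
  | one => simpa using h1
  | more n ih0 ih1 =>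
    have hdn : |d| ^ (n + 2) ≤ r ^ (n + 2) := pow_le_pow_left₀ (abs_nonneg d) hdr _
    calc |G (n + 2)| ≤ |a| * |G (n + 1)| + |b| * |G n| + |c| * |d| ^ (n + 2) := by
          rw [hG, ← abs_mul, ← abs_mul, ← abs_pow, ← abs_mul]; exact abs_add_three _ _ _
      _ ≤ |a| * (C * r ^ (n + 1)) + |b| * (C * r ^ n) + |c| * r ^ (n + 2) := by gcongr
      _ = r ^ n * (C * (|a| * r + |b|) + |c| * r ^ 2) := by ring
      _ ≤ r ^ n * (C * r ^ 2) := by gcongr; linarith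
      _ = C * r ^ (n + 2) := by ring

theorem recurrence_add_four (n : ℕ) :
    G (n + 4) = (a ^ 2 + 2 * b) * G (n + 2) - b ^ 2 * G n
      + c * (d ^ 2 + a * d - b) * d ^ (n + 2) := by
  linear_combination hG (n + 2) + a * hG (n + 1) - b * hG n

theorem alternating_recurrence (j k : ℕ) :
    (-1) ^ (k + 2) * G (2 * (k + 2) + j)
      + (a ^ 2 + 2 * b) * ((-1) ^ (k + 1) * G (2 * (k + 1) + j))
      + b ^ 2 * ((-1) ^ k * G (2 * k + j))
      = c * (d ^ 2 + a * d - b) * d ^ (j + 2) * (-d ^ 2) ^ k := by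
  rw [show 2 * (k + 2) + j = 2 * k + j + 4 by ring, show 2 * (k + 1) + j = 2 * k + j + 2 by ring,
    recurrence_add_four hG, neg_pow (d ^ 2), ← pow_mul]
  ring

theorem mul_tsum_alternating_subseq (hd : |d| < 1) {j : ℕ}
    (hs : Summable fun k => (-1) ^ k * G (2 * k + j)) :
    (a ^ 2 + (b + 1) ^ 2) * ∑' k, (-1) ^ k * G (2 * k + j)
      = (a ^ 2 + 2 * b + 1) * G j - G (j + 2)
        + c * (d ^ 2 + a * d - b) * d ^ (j + 2) / (1 + d ^ 2) := by
  have hgeo : HasSum (fun k => (-d ^ 2) ^ k) (1 + d ^ 2)⁻¹ := by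
    simpa using hasSum_geometric_of_abs_lt_one (r := -d ^ 2)
      (by rwa [abs_neg, abs_sq, sq_lt_one_iff_abs_lt_one])
  have := hs.hasSum.linear_recurrence
    (hgeo.mul_left (c * (d ^ 2 + a * d - b) * d ^ (j + 2))) (alternating_recurrence hG j)
  simp only [mul_zero, zero_add, mul_one, pow_zero, pow_one, one_mul, add_comm 2 j] at this
  linear_combination this

end Recurrence

theorem tendsto_tsum_of_even_corners {G Γ X : ℕ → ℝ}
    (hs : Summable fun k => (-1) ^ k * G (2 * k))
    (hΓeven : ∀ n : ℕ, Even n → Γ n = ∑ k ∈ range (n / 2 + 1), (-1 : ℝ) ^ k * G (2 * k))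
    (hXeven : ∀ n : ℕ, 2 ≤ n → Even n → X n = Γ n)
    (hXodd : ∀ n : ℕ, 1 ≤ n → Odd n → X n = Γ (n - 1)) :
    Tendsto X atTop (𝓝 (∑' k, (-1) ^ k * G (2 * k))) := by
  refine tendsto_of_eq_partial_sum (m := fun n => n / 2 + 1) hs
    (tendsto_atTop_atTop.2 fun N => ⟨2 * N, fun n hn => by omega⟩) ?_
  filter_upwards [eventually_ge_atTop 2] with n hn
  rcases Nat.even_or_odd n with he | ⟨m, rfl⟩
  · rw [hXeven n hn he, hΓeven n he]
  · rw [hXodd _ (by omega) ⟨m, rfl⟩, hΓeven _ ⟨m, by omega⟩,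
      show (2 * m + 1 - 1) / 2 = (2 * m + 1) / 2 by omega]

theorem tendsto_tsum_of_odd_corners {G Γ Y : ℕ → ℝ}
    (hs : Summable fun k => (-1) ^ k * G (2 * k + 1))
    (hΓodd : ∀ n : ℕ, Odd n →
      Γ n = ∑ k ∈ range ((n - 1) / 2 + 1), (-1 : ℝ) ^ k * G (2 * k + 1))
    (hYeven : ∀ n : ℕ, 2 ≤ n → Even n → Y n = Γ (n - 1))
    (hYodd : ∀ n : ℕ, 1 ≤ n → Odd n → Y n = Γ n) :
    Tendsto Y atTop (𝓝 (∑' k, (-1) ^ k * G (2 * k + 1))) := by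
  refine tendsto_of_eq_partial_sum (m := fun n => (n + 1) / 2) hs
    (tendsto_atTop_atTop.2 fun N => ⟨2 * N, fun n hn => by omega⟩) ?_
  filter_upwards [eventually_ge_atTop 2] with n hn
  rcases Nat.even_or_odd n with ⟨m, rfl⟩ | ⟨m, rfl⟩
  · rw [hYeven _ hn ⟨m, rfl⟩, hΓodd _ ⟨m - 1, by omega⟩,
      show (m + m - 1 - 1) / 2 + 1 = (m + m + 1) / 2 by omega]
  · rw [hYodd _ (by omega) ⟨m, rfl⟩, hΓodd _ ⟨m, rfl⟩,
      show (2 * m + 1 - 1) / 2 + 1 = (2 * m + 1 + 1) / 2 by omega]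

theorem stmt_11_general (a b c d : ℝ) (ha : 0 < a) (hb : 0 < b) (hd : 0 ≤ d)
    (α : ℝ)
    (hα : α = (a + Real.sqrt (a^2 + 4*b)) / 2)
    (hαlt : |α| < 1) (hdlt : d < 1)
    (G : ℕ → ℝ)
    (hG : ∀ n : ℕ, 2 ≤ n → G n = a * G (n-1) + b * G (n-2) + c * d^n)
    (Gm1 Gm2 : ℝ)
    (hGm1 : Gm1 = (G 1 - a * G 0 - c*d) / b)
    (hGm2 : Gm2 = ((a^2 + b) * G 0 - a * G 1 + c * (a*d - b)) / b^2)
    (Γ : ℕ → ℝ)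
    (hΓeven : ∀ n : ℕ, Even n →
      Γ n = ∑ k ∈ Finset.range (n/2 + 1), (-1:ℝ)^k * G (2*k))
    (hΓodd : ∀ n : ℕ, Odd n →
      Γ n = ∑ k ∈ Finset.range ((n-1)/2 + 1), (-1:ℝ)^k * G (2*k+1))
    (X Y : ℕ → ℝ)
    (hXeven : ∀ n : ℕ, 2 ≤ n → Even n → X n = Γ n)
    (hYeven : ∀ n : ℕ, 2 ≤ n → Even n → Y n = Γ (n-1))
    (hXodd : ∀ n : ℕ, 1 ≤ n → Odd n → X n = Γ (n-1))
    (hYodd : ∀ n : ℕ, 1 ≤ n → Odd n → Y n = Γ n) :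
    Filter.Tendsto X Filter.atTop
      (nhds ((G 0 + b^2 * Gm2 - c * (d^2 + a*d - b) / (d^2 + 1)) / (a^2 + (b+1)^2)))
    ∧ Filter.Tendsto Y Filter.atTop
      (nhds ((G 1 + b^2 * Gm1 - c * d * (d^2 + a*d - b) / (d^2 + 1)) / (a^2 + (b+1)^2))) := by
  have hG' (n : ℕ) : G (n + 2) = a * G (n + 1) + b * G n + c * d ^ (n + 2) := by
    simpa using hG (n + 2) le_add_self
  obtain ⟨r, hr, hr1⟩ := exists_between (max_lt (abs_lt.1 hαlt).2 hdlt)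
  obtain ⟨hαr, hdr⟩ := max_lt_iff.1 hr
  obtain ⟨C, hC⟩ := exists_abs_le_mul_pow_of_recurrence hG' (hd.trans_lt hdr)
    ((abs_of_nonneg hd).trans_le hdr.le)
    (by rw [abs_of_pos ha, abs_of_pos hb]
        exact mul_add_lt_sq_of_root_lt (by positivity) (hα ▸ hαr))
  have hs : Summable G := .of_norm_bounded
    ((summable_geometric_of_lt_one (hd.trans hdr.le) hr1).mul_left C) hC
  have hd1 : |d| < 1 := by rwa [abs_of_nonneg hd]
  have hD : a ^ 2 + (b + 1) ^ 2 ≠ 0 := by positivity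
  have hs0 := hs.alternating_subseq 0
  have hs1 := hs.alternating_subseq 1
  have hS0 := mul_tsum_alternating_subseq hG' hd1 hs0
  have hS1 := mul_tsum_alternating_subseq hG' hd1 hs1
  simp only [add_zero, zero_add, Nat.reduceAdd] at hs0 hS0 hS1
  constructor
  · convert tendsto_tsum_of_even_corners hs0 hΓeven hXeven hXodd using 2
    rw [div_eq_iff hD, mul_comm (∑' _, _), hS0, hGm2, show G 2 = _ from hG' 0]
    field_simp
    ring
  · convert tendsto_tsum_of_odd_corners hs1 hΓodd hYeven hYodd using 2
    rw [div_eq_iff hD, mul_comm (∑' _, _), hS1, hGm1, show G 3 = _ from hG' 1,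
      show G 2 = _ from hG' 0]
    field_simp
    ring

theorem stmt_11 (a b c d : ℝ) (ha : 0 < a) (hb : 0 < b) (hc : 0 ≤ c) (hd : 0 ≤ d)
    (hden : d^2 - a*d - b ≠ 0)
    (α β : ℝ)
    (hα : α = (a + Real.sqrt (a^2 + 4*b)) / 2)
    (hβ : β = (a - Real.sqrt (a^2 + 4*b)) / 2)
    (hαlt : |α| < 1) (hβlt : |β| < 1) (hdlt : d < 1)
    (G : ℕ → ℝ)
    (hG : ∀ n : ℕ, 2 ≤ n → G n = a * G (n-1) + b * G (n-2) + c * d^n)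
    (Gm1 Gm2 : ℝ)
    (hGm1 : Gm1 = (G 1 - a * G 0 - c*d) / b)
    (hGm2 : Gm2 = ((a^2 + b) * G 0 - a * G 1 + c * (a*d - b)) / b^2)
    (Γ : ℕ → ℝ)
    (hΓeven : ∀ n : ℕ, Even n →
      Γ n = ∑ k ∈ Finset.range (n/2 + 1), (-1:ℝ)^k * G (2*k))
    (hΓodd : ∀ n : ℕ, Odd n →
      Γ n = ∑ k ∈ Finset.range ((n-1)/2 + 1), (-1:ℝ)^k * G (2*k+1))
    (X Y : ℕ → ℝ)
    (hXeven : ∀ n : ℕ, 2 ≤ n → Even n → X n = Γ n)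
    (hYeven : ∀ n : ℕ, 2 ≤ n → Even n → Y n = Γ (n-1))
    (hXodd : ∀ n : ℕ, 1 ≤ n → Odd n → X n = Γ (n-1))
    (hYodd : ∀ n : ℕ, 1 ≤ n → Odd n → Y n = Γ n) :
    Filter.Tendsto X Filter.atTop
      (nhds ((G 0 + b^2 * Gm2 - c * (d^2 + a*d - b) / (d^2 + 1)) / (a^2 + (b+1)^2)))
    ∧ Filter.Tendsto Y Filter.atTop
      (nhds ((G 1 + b^2 * Gm1 - c * d * (d^2 + a*d - b) / (d^2 + 1)) / (a^2 + (b+1)^2))) :=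
  stmt_11_general a b c d ha hb hd α hα hαlt hdlt G hG Gm1 Gm2 hGm1 hGm2 Γ hΓeven hΓodd X Y hXeven
    hYeven hXodd hYodd
end

section
/- (Partial sum formula) Assume a + b ≠ 1. Then for every natural number n: Σ_{k=0}^{n} G k = (1/(a + b − 1)) · ( (a − 1)·G 0 − G 1 + b·G n + G(n+1) − c·d²·Σ_{k=0}^{n−1} d^k ). -/
theorem stmt_12 (a b c d : ℝ) (ha : 0 < a) (hb : 0 < b) (hc : 0 ≤ c) (hd : 0 ≤ d)
    (hden : d^2 - a*d - b ≠ 0) (hab : a + b ≠ 1)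
    (G : ℕ → ℝ)
    (hG : ∀ n : ℕ, 2 ≤ n → G n = a * G (n-1) + b * G (n-2) + c * d^n) :
    ∀ n : ℕ, ∑ k ∈ Finset.range (n+1), G k
      = (1 / (a + b - 1)) *
        ((a - 1) * G 0 - G 1 + b * G n + G (n+1)
          - c * d^2 * ∑ k ∈ Finset.range n, d^k) := by
  have hab' : a + b - 1 ≠ 0 := sub_ne_zero.mpr hab
  intro n
  induction n with
  | zero =>
    simp
    field_simp
    ring
  | succ n ih =>
    have hrec := hG (n+2) (by omega)
    simp only [Nat.add_sub_cancel] at hrec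
    have h1 : (n:ℕ)+2-1 = n+1 := by omega
    rw [h1] at hrec
    rw [Finset.sum_range_succ, ih, Finset.sum_range_succ]
    field_simp
    rw [hrec]
    ring
end

section
/- (Total length of an inwinding spiral) Assume |α| < 1, |β| < 1 and d < 1. Then the infinite series Σ_{k=0}^{∞} G k converges, a + b − 1 ≠ 0, and Σ_{k=0}^{∞} G k = (1/(a + b − 1)) · ( (a − 1)·G 0 − G 1 − c·d²/(1 − d) ). -/
/-!
Factor the characteristic polynomial as `(λ - α)(λ - β)`. Then `H n = G (n+1) - β G n` solves the
first-order recurrence `H (n+1) = α H n + c d^(n+2)`, and `G (n+1) = β G n + H n`. A first-order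
recurrence with ratio of modulus `< 1` and summable forcing has summable solution (it is the Cauchy
product of the geometric series with the forcing), so `H` and then `G` are summable. Summing the
recurrence term by term gives `(a + b - 1) ∑ G = (a - 1) G 0 - G 1 - ∑ c d^(n+2)`, and
`1 - a - b = (1 - α)(1 - β) > 0`.
-/

open Finset

theorem add_eq_and_mul_eq_of_quadratic_roots {a b α β : ℝ} (hdisc : 0 ≤ a ^ 2 + 4 * b)
    (hα : α = (a + √(a ^ 2 + 4 * b)) / 2) (hβ : β = (a - √(a ^ 2 + 4 * b)) / 2) :
    α + β = a ∧ α * β = -b := by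
  have hsq := Real.sq_sqrt hdisc
  subst hα hβ
  constructor
  · ring
  · linear_combination -hsq / 4

theorem succ_eq_pow_mul_add_sum_antidiagonal {R : Type*} [Semiring R] {ρ : R} {u e : ℕ → R}
    (h : ∀ n, u (n + 1) = ρ * u n + e n) (n : ℕ) :
    u (n + 1) = ρ ^ (n + 1) * u 0 + ∑ ij ∈ antidiagonal n, ρ ^ ij.1 * e ij.2 := by
  induction n with
  | zero => simp [h]
  | succ n ih =>
    rw [h, ih, Nat.sum_antidiagonal_succ, mul_add, mul_sum]
    simp only [pow_succ', mul_assoc, pow_zero, one_mul]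
    abel

theorem summable_of_succ_eq_mul_add {ρ : ℝ} {u e : ℕ → ℝ} (hρ : |ρ| < 1) (he : Summable e)
    (h : ∀ n, u (n + 1) = ρ * u n + e n) : Summable u := by
  have hgeom : Summable fun n => ‖ρ ^ n‖ := by
    simpa [norm_pow] using summable_geometric_of_lt_one (abs_nonneg ρ) hρ
  rw [← summable_nat_add_iff 1, funext (succ_eq_pow_mul_add_sum_antidiagonal h)]
  exact ((summable_nat_add_iff 1).2 hgeom.of_norm).mul_right _ |>.add
    (summable_norm_sum_mul_antidiagonal_of_summable_norm hgeom he.norm).of_norm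

theorem summable_of_linear_recurrence {a b α β : ℝ} {G e : ℕ → ℝ} (hsum : α + β = a)
    (hprod : α * β = -b) (hα : |α| < 1) (hβ : |β| < 1) (he : Summable e)
    (h : ∀ n, G (n + 2) = a * G (n + 1) + b * G n + e n) : Summable G := by
  have hH : Summable fun n => G (n + 1) - β * G n := by
    refine summable_of_succ_eq_mul_add hα he fun n => ?_
    rw [h]
    linear_combination G n * hprod - G (n + 1) * hsum
  exact summable_of_succ_eq_mul_add hβ hH fun n => by ring

theorem mul_tsum_eq_of_linear_recurrence {a b : ℝ} {G e : ℕ → ℝ} (hG : Summable G)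
    (he : Summable e) (h : ∀ n, G (n + 2) = a * G (n + 1) + b * G n + e n) :
    (a + b - 1) * ∑' n, G n = (a - 1) * G 0 - G 1 - ∑' n, e n := by
  have hG1 : Summable fun n => G (n + 1) := (summable_nat_add_iff 1).2 hG
  have hsplit1 := hG.sum_add_tsum_nat_add 1
  have hsplit2 := hG.sum_add_tsum_nat_add 2
  have htail : ∑' n, G (n + 2) = a * ∑' n, G (n + 1) + b * ∑' n, G n + ∑' n, e n := by
    rw [tsum_congr h, ((hG1.mul_left a).add (hG.mul_left b)).tsum_add he,
      (hG1.mul_left a).tsum_add (hG.mul_left b), tsum_mul_left, tsum_mul_left]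
  simp only [sum_range_succ, sum_range_zero, zero_add] at hsplit1 hsplit2
  linear_combination hsplit2 - a * hsplit1 - htail

theorem stmt_14_general (a b c d : ℝ) (hb : 0 < b) (hd : 0 ≤ d)
    (α β : ℝ)
    (hα : α = (a + Real.sqrt (a^2 + 4*b)) / 2)
    (hβ : β = (a - Real.sqrt (a^2 + 4*b)) / 2)
    (hαlt : |α| < 1) (hβlt : |β| < 1) (hdlt : d < 1)
    (G : ℕ → ℝ)
    (hG : ∀ n : ℕ, 2 ≤ n → G n = a * G (n-1) + b * G (n-2) + c * d^n) :
    Summable G ∧ a + b - 1 ≠ 0 ∧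
      ∑' k : ℕ, G k
        = (1 / (a + b - 1)) * ((a - 1) * G 0 - G 1 - c * d^2 / (1 - d)) := by
  obtain ⟨hsum, hprod⟩ := add_eq_and_mul_eq_of_quadratic_roots (by positivity) hα hβ
  have hrec (n : ℕ) : G (n + 2) = a * G (n + 1) + b * G n + c * d ^ (n + 2) :=
    hG (n + 2) (by omega)
  have hforcing : HasSum (fun n => c * d ^ (n + 2)) (c * d ^ 2 / (1 - d)) := by
    have hshift : (fun n : ℕ => c * d ^ (n + 2)) = fun n => c * d ^ 2 * d ^ n :=
      funext fun n => by ring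
    rw [hshift, div_eq_mul_inv]
    exact (hasSum_geometric_of_lt_one hd hdlt).mul_left _
  have hsummable := summable_of_linear_recurrence hsum hprod hαlt hβlt hforcing.summable hrec
  have hab : a + b - 1 ≠ 0 := by
    have h1 : 1 - a - b = (1 - α) * (1 - β) := by linear_combination hsum - hprod
    have h2 : 0 < (1 - α) * (1 - β) :=
      mul_pos (by linarith [le_abs_self α]) (by linarith [le_abs_self β])
    linarith
  refine ⟨hsummable, hab, ?_⟩
  have htsum := mul_tsum_eq_of_linear_recurrence hsummable hforcing.summable hrec
  rw [hforcing.tsum_eq] at htsum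
  field_simp
  linear_combination htsum

theorem stmt_14 (a b c d : ℝ) (ha : 0 < a) (hb : 0 < b) (hc : 0 ≤ c) (hd : 0 ≤ d)
    (hden : d^2 - a*d - b ≠ 0)
    (α β : ℝ)
    (hα : α = (a + Real.sqrt (a^2 + 4*b)) / 2)
    (hβ : β = (a - Real.sqrt (a^2 + 4*b)) / 2)
    (hαlt : |α| < 1) (hβlt : |β| < 1) (hdlt : d < 1)
    (G : ℕ → ℝ)
    (hG : ∀ n : ℕ, 2 ≤ n → G n = a * G (n-1) + b * G (n-2) + c * d^n) :
    Summable G ∧ a + b - 1 ≠ 0 ∧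
      ∑' k : ℕ, G k
        = (1 / (a + b - 1)) * ((a - 1) * G 0 - G 1 - c * d^2 / (1 - d)) :=
  stmt_14_general a b c d hb hd α β hα hβ hαlt hβlt hdlt G hG
end

section
/- (Decomposition into fundamental Horadam numbers) For every natural number n ≥ 1: G n = (h n)·G 1 + b·(h(n−1))·G 0 + p·( d^n − d·(h n) − b·(h(n−1)) ). -/
/-! Subtracting the particular solution `p d^n` from `G` leaves a solution of the homogeneous
recurrence, and every such solution is `h n · H 1 + b h (n-1) · H 0`, since both sides satisfy the
same second-order recurrence and agree at `n = 1, 2`. -/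

section HoradamRecurrence

variable {R : Type*} [CommRing R] {a b : R}

theorem eq_horadam_combination {h H : ℕ → R} (hh0 : h 0 = 0) (hh1 : h 1 = 1)
    (hh : ∀ n, h (n + 2) = a * h (n + 1) + b * h n)
    (hH : ∀ n, H (n + 2) = a * H (n + 1) + b * H n) (n : ℕ) :
    H (n + 1) = h (n + 1) * H 1 + b * h n * H 0 := by
  induction n using Nat.twoStepInduction with
  | zero => simp [hh0, hh1]
  | one => rw [hH, hh, hh0, hh1]; ring
  | more n ih₀ ih₁ =>
    rw [hH, ih₀, ih₁, hh (n + 1), hh n]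
    ring

theorem sub_geometric_homogeneous {c d p : R} (hp : p * (d ^ 2 - a * d - b) = c * d ^ 2)
    {G : ℕ → R} (hG : ∀ n, G (n + 2) = a * G (n + 1) + b * G n + c * d ^ (n + 2)) (n : ℕ) :
    G (n + 2) - p * d ^ (n + 2) = a * (G (n + 1) - p * d ^ (n + 1)) + b * (G n - p * d ^ n) := by
  rw [hG]
  linear_combination -d ^ n * hp

end HoradamRecurrence

theorem stmt_16_general (a b c d : ℝ)
    (hden : d^2 - a*d - b ≠ 0)
    (p : ℝ) (hp : p = c * d^2 / (d^2 - a*d - b))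
    (G : ℕ → ℝ)
    (hG : ∀ n : ℕ, 2 ≤ n → G n = a * G (n-1) + b * G (n-2) + c * d^n)
    (h : ℕ → ℝ) (hh0 : h 0 = 0) (hh1 : h 1 = 1)
    (hhrec : ∀ n : ℕ, 2 ≤ n → h n = a * h (n-1) + b * h (n-2)) :
    ∀ n : ℕ, 1 ≤ n →
      G n = h n * G 1 + b * h (n-1) * G 0 + p * (d^n - d * h n - b * h (n-1)) := by
  intro n hn
  obtain ⟨n, rfl⟩ : ∃ m, n = m + 1 := ⟨n - 1, by omega⟩
  have hp_mul : p * (d ^ 2 - a * d - b) = c * d ^ 2 := by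
    rw [hp]
    exact div_mul_cancel₀ _ hden
  have hG' (n : ℕ) : G (n + 2) = a * G (n + 1) + b * G n + c * d ^ (n + 2) := by
    simpa using hG (n + 2) (by omega)
  have hh' (n : ℕ) : h (n + 2) = a * h (n + 1) + b * h n := by
    simpa using hhrec (n + 2) (by omega)
  have hdecomp := eq_horadam_combination (H := fun n => G n - p * d ^ n) hh0 hh1 hh'
    (sub_geometric_homogeneous hp_mul hG') n
  simp only [Nat.add_sub_cancel]
  linear_combination hdecomp

theorem stmt_16 (a b c d : ℝ) (ha : 0 < a) (hb : 0 < b) (hc : 0 ≤ c) (hd : 0 ≤ d)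
    (hden : d^2 - a*d - b ≠ 0)
    (p : ℝ) (hp : p = c * d^2 / (d^2 - a*d - b))
    (G : ℕ → ℝ)
    (hG : ∀ n : ℕ, 2 ≤ n → G n = a * G (n-1) + b * G (n-2) + c * d^n)
    (h : ℕ → ℝ) (hh0 : h 0 = 0) (hh1 : h 1 = 1)
    (hhrec : ∀ n : ℕ, 2 ≤ n → h n = a * h (n-1) + b * h (n-2)) :
    ∀ n : ℕ, 1 ≤ n →
      G n = h n * G 1 + b * h (n-1) * G 0 + p * (d^n - d * h n - b * h (n-1)) :=
  stmt_16_general a b c d hden p hp G hG h hh0 hh1 hhrec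
end

section
/- (Distance relation for corner points) For every natural number n ≥ 2: (X n − X(n−1))² + (Y n − Y(n−1))² = (G n)²; that is, the distance between consecutive corner points of the rectangular generalized Fibonacci spiral equals |G n|. -/
theorem stmt_18 (a b c d : ℝ) (ha : 0 < a) (hb : 0 < b) (hc : 0 ≤ c) (hd : 0 ≤ d)
    (hden : d^2 - a*d - b ≠ 0)
    (G : ℕ → ℝ)
    (hG : ∀ n : ℕ, 2 ≤ n → G n = a * G (n-1) + b * G (n-2) + c * d^n)
    (Γ : ℕ → ℝ)
    (hΓeven : ∀ n : ℕ, Even n →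
      Γ n = ∑ k ∈ Finset.range (n/2 + 1), (-1:ℝ)^k * G (2*k))
    (hΓodd : ∀ n : ℕ, Odd n →
      Γ n = ∑ k ∈ Finset.range ((n-1)/2 + 1), (-1:ℝ)^k * G (2*k+1))
    (X Y : ℕ → ℝ)
    (hXeven : ∀ n : ℕ, 2 ≤ n → Even n → X n = Γ n)
    (hYeven : ∀ n : ℕ, 2 ≤ n → Even n → Y n = Γ (n-1))
    (hXodd : ∀ n : ℕ, 1 ≤ n → Odd n → X n = Γ (n-1))
    (hYodd : ∀ n : ℕ, 1 ≤ n → Odd n → Y n = Γ n) :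
    ∀ n : ℕ, 2 ≤ n →
      (X n - X (n-1))^2 + (Y n - Y (n-1))^2 = (G n)^2 ∧
      Real.sqrt ((X n - X (n-1))^2 + (Y n - Y (n-1))^2) = |G n| := by
  intro n hn
  have key : (X n - X (n-1))^2 + (Y n - Y (n-1))^2 = (G n)^2 := by
    rcases Nat.even_or_odd n with he | ho
    · -- n even, n = 2*m with m ≥ 1
      obtain ⟨m, hm⟩ := he
      have hm' : n = 2*m := by omega
      have hm1 : 1 ≤ m := by omega
      have he : Even n := ⟨m, hm⟩
      have hodd : Odd (n-1) := ⟨m-1, by omega⟩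
      have h1 : X n = Γ n := hXeven n hn he
      have h2 : Y n = Γ (n-1) := hYeven n hn he
      have h3 : X (n-1) = Γ (n-1-1) := hXodd (n-1) (by omega) hodd
      have h4 : Y (n-1) = Γ (n-1) := hYodd (n-1) (by omega) hodd
      have hdiff : Γ n - Γ (n-1-1) = (-1:ℝ)^m * G (2*m) := by
        rw [hΓeven n he, hΓeven (n-1-1) ⟨m-1, by omega⟩]
        have e1 : n/2 = m := by omega
        have e2 : (n-1-1)/2 = m - 1 := by omega
        rw [e1, e2]
        have e3 : m - 1 + 1 = m := by omega
        rw [e3, Finset.sum_range_succ]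
        ring
      rw [h1, h2, h3, h4, hdiff]
      have : G n = G (2*m) := by rw [hm']
      rw [this, mul_pow]
      have h5 : ((-1:ℝ)^m)^2 = 1 := by
        rw [← pow_mul, mul_comm, pow_mul, neg_one_sq, one_pow]
      rw [h5]; ring
    · -- n odd, n = 2*m+1 with m ≥ 1
      obtain ⟨m, hm⟩ := ho
      have hm1 : 1 ≤ m := by omega
      have heven : Even (n-1) := ⟨m, by omega⟩
      have h1 : X n = Γ (n-1) := hXodd n (by omega) ⟨m, hm⟩
      have h2 : Y n = Γ n := hYodd n (by omega) ⟨m, hm⟩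
      have h3 : X (n-1) = Γ (n-1) := hXeven (n-1) (by omega) heven
      have h4 : Y (n-1) = Γ (n-1-1) := hYeven (n-1) (by omega) heven
      have hdiff : Γ n - Γ (n-1-1) = (-1:ℝ)^m * G (2*m+1) := by
        rw [hΓodd n ⟨m, hm⟩, hΓodd (n-1-1) ⟨m-1, by omega⟩]
        have e1 : (n-1)/2 = m := by omega
        have e2 : (n-1-1-1)/2 = m - 1 := by omega
        rw [e1, e2]
        have e3 : m - 1 + 1 = m := by omega
        rw [e3, Finset.sum_range_succ]
        ring
      rw [h1, h2, h3, h4, hdiff]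
      have : G n = G (2*m+1) := by rw [hm]
      rw [this, mul_pow]
      have h5 : ((-1:ℝ)^m)^2 = 1 := by
        rw [← pow_mul, mul_comm, pow_mul, neg_one_sq, one_pow]
      rw [h5]; ring
  exact ⟨key, by rw [key, Real.sqrt_sq_eq_abs]⟩
end
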